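/- (Fatou–Radó) Let n ≥ 1 and let f : 𝔻 → 𝔻 be an analytic function that is surjective onto 𝔻 and has constant valence n, i.e., for every w ∈ 𝔻 the equation f(z) = w has exactly n solutions in 𝔻 counted with multiplicity. Then f is a finite Blaschke product of degree n: there exist α ∈ ℝ and z_1,…,z_n ∈ 𝔻 such that f(z) = e^{iα} ∏_{k=1}^n (z_k − z)/(1 − conj(z_k)·z) for all z ∈ 𝔻. -/

import Mathlib

/-!
Divide `f` by the Blaschke product `B` of its zeros, counted with multiplicity: what is left is
a holomorphic function `h` without zeros in `𝔻`. Constant valence makes `f` proper. Indeed, if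
`f zⱼ → w ∈ 𝔻` while `‖zⱼ‖ → 1`, then near a preimage of `w` of multiplicity `m` the function
`f - w` is the `m`-th power of a local coordinate, so every value close to `w` is taken `m` times
there; together with `zⱼ` this gives `f zⱼ` at least `n + 1` preimages. Hence `‖f z‖ → 1` as
`‖z‖ → 1`, and since also `‖B z‖ → 1`, `‖h z‖ → 1`. The maximum principle for `h` and `1 / h`
then gives `‖h‖ = 1` on `𝔻`, so `h` is a unimodular constant.
-/

open Complex ComplexConjugate Filter

/-- `f` takes the value `w` on the open unit disk exactly `n` times, counted with
multiplicity: there is a multiset `s` of cardinality `n`, contained in `𝔻`, whose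
underlying set is the solution set of `f z = w` in `𝔻`, and such that the multiplicity
of each solution `z₀` in `s` is the order of vanishing of `f − w` at `z₀`. -/
def ValenceEq (f : ℂ → ℂ) (w : ℂ) (n : ℕ) : Prop :=
  ∃ s : Multiset ℂ, s.card = n ∧ (∀ z ∈ s, ‖z‖ < 1) ∧
    (∀ z : ℂ, ‖z‖ < 1 → (f z = w ↔ z ∈ s)) ∧
    ∀ z₀ ∈ s, ∃ g : ℂ → ℂ, AnalyticAt ℂ g z₀ ∧ g z₀ ≠ 0 ∧
      ∀ᶠ ζ in nhds z₀, f ζ - w = (ζ - z₀) ^ (Multiset.count z₀ s) * g ζ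

open Metric Set Topology

noncomputable def blaschkeFactor (a z : ℂ) : ℂ := (a - z) / (1 - conj a * z)

noncomputable def blaschkeProduct (s : Multiset ℂ) (z : ℂ) : ℂ :=
  (s.map (blaschkeFactor · z)).prod

lemma one_sub_conj_mul_ne_zero {a z : ℂ} (ha : ‖a‖ < 1) (hz : ‖z‖ ≤ 1) : 1 - conj a * z ≠ 0 := by
  refine sub_ne_zero.2 fun h => ?_
  have : ‖conj a * z‖ < 1 := by
    rw [norm_mul, RCLike.norm_conj]
    nlinarith [norm_nonneg a, norm_nonneg z]
  simp [← h] at this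

lemma one_sub_norm_blaschkeFactor_sq {a z : ℂ} (h : 1 - conj a * z ≠ 0) :
    1 - ‖blaschkeFactor a z‖ ^ 2 = (1 - ‖a‖ ^ 2) * (1 - ‖z‖ ^ 2) / ‖1 - conj a * z‖ ^ 2 := by
  rw [blaschkeFactor, norm_div, div_pow, eq_div_iff (by simpa using h), sub_mul,
    div_mul_cancel₀ _ (by simpa using h)]
  simp only [← normSq_eq_norm_sq, normSq_apply, sub_re, sub_im, one_re, one_im, mul_re, mul_im,
    conj_re, conj_im]
  ring

lemma prod_sub_eq_blaschkeProduct_mul {s : Multiset ℂ} (hs : ∀ a ∈ s, ‖a‖ < 1) {z : ℂ}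
    (hz : ‖z‖ ≤ 1) :
    (s.map (z - ·)).prod = blaschkeProduct s z * (s.map fun a => conj a * z - 1).prod := by
  rw [blaschkeProduct, ← Multiset.prod_map_mul]
  refine congrArg _ (Multiset.map_congr rfl fun a ha => ?_)
  have := one_sub_conj_mul_ne_zero (hs a ha) hz
  rw [blaschkeFactor, div_mul_eq_mul_div, eq_div_iff this]
  ring

lemma norm_blaschkeFactor_le_one {a z : ℂ} (ha : ‖a‖ < 1) (hz : ‖z‖ ≤ 1) :
    ‖blaschkeFactor a z‖ ≤ 1 := by
  have hid := one_sub_norm_blaschkeFactor_sq (one_sub_conj_mul_ne_zero ha hz)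
  have : 0 ≤ 1 - ‖blaschkeFactor a z‖ ^ 2 := hid ▸ div_nonneg
    (mul_nonneg (by nlinarith [norm_nonneg a]) (by nlinarith [norm_nonneg z])) (sq_nonneg _)
  nlinarith [norm_nonneg (blaschkeFactor a z)]

lemma one_sub_norm_blaschkeFactor_sq_le {a z : ℂ} (ha : ‖a‖ < 1) (hz : ‖z‖ ≤ 1) :
    1 - ‖blaschkeFactor a z‖ ^ 2 ≤ (1 - ‖a‖ ^ 2) / (1 - ‖a‖) ^ 2 * (1 - ‖z‖ ^ 2) := by
  have hD : 1 - ‖a‖ ≤ ‖1 - conj a * z‖ := by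
    have := norm_sub_norm_le (1 : ℂ) (conj a * z)
    rw [norm_one, norm_mul, RCLike.norm_conj] at this
    nlinarith [norm_nonneg a]
  calc 1 - ‖blaschkeFactor a z‖ ^ 2
      = (1 - ‖a‖ ^ 2) * (1 - ‖z‖ ^ 2) / ‖1 - conj a * z‖ ^ 2 :=
        one_sub_norm_blaschkeFactor_sq (one_sub_conj_mul_ne_zero ha hz)
    _ ≤ (1 - ‖a‖ ^ 2) * (1 - ‖z‖ ^ 2) / (1 - ‖a‖) ^ 2 :=
        div_le_div_of_nonneg_left
          (mul_nonneg (by nlinarith [norm_nonneg a]) (by nlinarith [norm_nonneg z]))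
          (by nlinarith) (pow_le_pow_left₀ (by linarith) hD 2)
    _ = (1 - ‖a‖ ^ 2) / (1 - ‖a‖) ^ 2 * (1 - ‖z‖ ^ 2) := by ring

noncomputable def atUnitCircle : Filter ℂ := comap (‖·‖) (𝓝[<] 1)

lemma eventually_norm_lt_one_atUnitCircle : ∀ᶠ z in atUnitCircle, ‖z‖ < 1 :=
  preimage_mem_comap self_mem_nhdsWithin

lemma eventually_lt_norm_atUnitCircle {ρ : ℝ} (hρ : ρ < 1) : ∀ᶠ z in atUnitCircle, ρ < ‖z‖ :=
  (tendsto_comap.eventually_mem (Ioo_mem_nhdsLT hρ)).mono fun _ h => h.1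

lemma tendsto_norm_atUnitCircle : Tendsto (‖·‖) atUnitCircle (𝓝 1) :=
  tendsto_comap.mono_right nhdsWithin_le_nhds

lemma tendsto_norm_blaschkeFactor {a : ℂ} (ha : ‖a‖ < 1) :
    Tendsto (‖blaschkeFactor a ·‖) atUnitCircle (𝓝 1) := by
  set K := (1 - ‖a‖ ^ 2) / (1 - ‖a‖) ^ 2
  have hlower : Tendsto (fun z : ℂ => 1 - K * (1 - ‖z‖ ^ 2)) atUnitCircle (𝓝 1) := by
    simpa using (((tendsto_norm_atUnitCircle.pow 2).const_sub 1).const_mul K).const_sub 1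
  refine tendsto_of_tendsto_of_tendsto_of_le_of_le' hlower tendsto_const_nhds ?_ ?_ <;>
    filter_upwards [eventually_norm_lt_one_atUnitCircle] with z hz
  · have := one_sub_norm_blaschkeFactor_sq_le ha hz.le
    nlinarith [norm_blaschkeFactor_le_one ha hz.le, norm_nonneg (blaschkeFactor a z)]
  · exact norm_blaschkeFactor_le_one ha hz.le

lemma tendsto_norm_blaschkeProduct {s : Multiset ℂ} (hs : ∀ a ∈ s, ‖a‖ < 1) :
    Tendsto (‖blaschkeProduct s ·‖) atUnitCircle (𝓝 1) := by
  have := tendsto_multiset_prod s fun a ha => tendsto_norm_blaschkeFactor (hs a ha)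
  simpa [blaschkeProduct, ← normHom_apply, map_multiset_prod (normHom (α := ℂ)), Multiset.map_map]
    using this

lemma norm_le_of_tendsto_norm_atUnitCircle {F : Type*} [NormedAddCommGroup F] [NormedSpace ℂ F]
    {g : ℂ → F} {C : ℝ} (hg : DifferentiableOn ℂ g (ball 0 1)) (hlim : Tendsto (‖g ·‖) atUnitCircle (𝓝 C))
    {z : ℂ} (hz : z ∈ ball 0 1) : ‖g z‖ ≤ C := by
  refine le_of_forall_pos_le_add fun ε hε => ?_
  have hsphere : ∀ᶠ r in 𝓝[<] 1, ∀ ζ : ℂ, ‖ζ‖ = r → ‖g ζ‖ < C + ε :=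
    eventually_comap.1 (hlim.eventually (gt_mem_nhds (lt_add_of_pos_right C hε)))
  obtain ⟨r, hr, hzr, hr1⟩ := (hsphere.and (Ioo_mem_nhdsLT (mem_ball_zero_iff.1 hz))).exists
  refine norm_le_of_forall_mem_frontier_norm_le isBounded_ball
    (hg.diffContOnCl_ball (closedBall_subset_ball hr1)) (fun ζ hζ => ?_)
    (subset_closure (mem_ball_zero_iff.2 hzr))
  rw [frontier_ball 0 (norm_nonneg z |>.trans_lt hzr).ne', mem_sphere_zero_iff_norm] at hζ
  exact (hr ζ hζ).le

lemma exists_eqOn_const_of_tendsto_norm_atUnitCircle {g : ℂ → ℂ}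
    (hg : DifferentiableOn ℂ g (ball 0 1)) (hg0 : ∀ z ∈ ball 0 1, g z ≠ 0)
    (hlim : Tendsto (‖g ·‖) atUnitCircle (𝓝 1)) :
    ∃ c : ℂ, ‖c‖ = 1 ∧ EqOn g (fun _ => c) (ball 0 1) := by
  have hnorm : ∀ z ∈ ball 0 1, ‖g z‖ = 1 := fun z hz => by
    have hinv : ‖(g z)⁻¹‖ ≤ 1 :=
      norm_le_of_tendsto_norm_atUnitCircle (hg.inv hg0) (by simpa using hlim.inv₀ one_ne_zero) hz
    rw [norm_inv] at hinv
    exact le_antisymm (norm_le_of_tendsto_norm_atUnitCircle hg hlim hz)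
      (inv_le_one₀ (norm_pos_iff.2 (hg0 z hz)) |>.1 hinv)
  have h0 : (0 : ℂ) ∈ ball 0 1 := mem_ball_self one_pos
  refine ⟨g 0, hnorm 0 h0, Complex.eqOn_of_isPreconnected_of_isMaxOn_norm
    (convex_ball 0 1).isPreconnected isOpen_ball hg h0 fun z hz => ?_⟩
  simp [hnorm z hz, hnorm 0 h0]

lemma Differentiable.fun_multisetProd {𝕜 E 𝔸 ι : Type*} [NontriviallyNormedField 𝕜]
    [NormedAddCommGroup E] [NormedSpace 𝕜 E] [NormedCommRing 𝔸] [NormedAlgebra 𝕜 𝔸]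
    {s : Multiset ι} {f : ι → E → 𝔸} (hf : ∀ i ∈ s, Differentiable 𝕜 (f i)) :
    Differentiable 𝕜 fun z => (s.map (f · z)).prod := by
  induction s using Multiset.induction_on with
  | empty => simp
  | cons i t ih =>
    simp only [Multiset.map_cons, Multiset.prod_cons]
    exact (hf i (Multiset.mem_cons_self i t)).mul
      (ih fun j hj => hf j (Multiset.mem_cons_of_mem hj))

lemma exists_eq_prod_sub_mul_of_analyticOrderAt_eq_count {U : Set ℂ} (hU : IsOpen U)
    {s : Multiset ℂ} (hsU : ∀ a ∈ s, a ∈ U) {g : ℂ → ℂ} (hg : DifferentiableOn ℂ g U)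
    (hord : ∀ z ∈ U, analyticOrderAt g z = s.count z) :
    ∃ h : ℂ → ℂ, DifferentiableOn ℂ h U ∧ (∀ z ∈ U, h z ≠ 0) ∧
      ∀ z ∈ U, g z = (s.map (z - ·)).prod * h z := by
  induction s using Multiset.induction_on generalizing g with
  | empty =>
    refine ⟨g, hg, fun z hz => ?_, fun z _ => by simp⟩
    exact ((hg.analyticAt (hU.mem_nhds hz)).analyticOrderAt_eq_zero).1 (by simp [hord z hz])
  | cons a t ih =>
    have haU : a ∈ U := hsU a (Multiset.mem_cons_self a t)
    have hga : g a = 0 := by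
      refine ((hg.analyticAt (hU.mem_nhds haU)).analyticOrderAt_ne_zero).1 ?_
      simp [hord a haU]
    have hfactor : g = (· - a) * dslope g a := funext fun z => by
      simpa [hga] using (sub_smul_dslope g a z).symm
    have hg₁ : DifferentiableOn ℂ (dslope g a) U :=
      (differentiableOn_dslope (hU.mem_nhds haU)).2 hg
    obtain ⟨h, hh, hh0, hgh⟩ := ih (fun b hb => hsU b (Multiset.mem_cons_of_mem hb)) hg₁
      fun z hz => by
        have := hord z hz
        rw [hfactor, analyticOrderAt_mul (by fun_prop) (hg₁.analyticAt (hU.mem_nhds hz))] at this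
        rcases eq_or_ne z a with rfl | hza
        · rw [analyticOrderAt_id_sub_const_self, Multiset.count_cons_self, Nat.cast_succ,
            add_comm] at this
          exact WithTop.add_right_cancel ENat.one_ne_top this
        · simpa [analyticOrderAt_id_sub_const_of_ne hza, Multiset.count_cons_of_ne hza] using this
    refine ⟨h, hh, hh0, fun z hz => ?_⟩
    rw [congrFun hfactor z, Pi.mul_apply, hgh z hz, Multiset.map_cons, Multiset.prod_cons,
      mul_assoc]

lemma exists_eq_blaschkeProduct_mul_of_analyticOrderAt_eq_count {s : Multiset ℂ}
    (hs : ∀ a ∈ s, ‖a‖ < 1) {g : ℂ → ℂ} (hg : DifferentiableOn ℂ g (ball 0 1))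
    (hord : ∀ z ∈ ball 0 1, analyticOrderAt g z = s.count z) :
    ∃ h : ℂ → ℂ, DifferentiableOn ℂ h (ball 0 1) ∧ (∀ z ∈ ball 0 1, h z ≠ 0) ∧
      ∀ z ∈ ball 0 1, g z = blaschkeProduct s z * h z := by
  obtain ⟨k, hk, hk0, hgk⟩ := exists_eq_prod_sub_mul_of_analyticOrderAt_eq_count isOpen_ball
    (fun a ha => mem_ball_zero_iff.2 (hs a ha)) hg hord
  refine ⟨fun z => (s.map fun a => conj a * z - 1).prod * k z,
    ((Differentiable.fun_multisetProd fun a _ => by fun_prop).differentiableOn).mul hk,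
    fun z hz => mul_ne_zero ?_ (hk0 z hz), fun z hz => ?_⟩
  · rw [mem_ball_zero_iff] at hz
    refine Multiset.prod_ne_zero fun h0 => ?_
    obtain ⟨a, ha, hza⟩ := Multiset.mem_map.1 h0
    exact one_sub_conj_mul_ne_zero (hs a ha) hz.le (by linear_combination -hza)
  · rw [hgk z hz, prod_sub_eq_blaschkeProduct_mul hs (mem_ball_zero_iff.1 hz).le, mul_assoc]

lemma analyticOrderAt_sub_eq_count {f : ℂ → ℂ} {w : ℂ} {s : Multiset ℂ}
    (hf : DifferentiableOn ℂ f (ball 0 1)) (hsf : ∀ z : ℂ, ‖z‖ < 1 → (f z = w ↔ z ∈ s))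
    (hfac : ∀ a ∈ s, ∃ G : ℂ → ℂ, AnalyticAt ℂ G a ∧ G a ≠ 0 ∧
      ∀ᶠ ζ in 𝓝 a, f ζ - w = (ζ - a) ^ s.count a * G ζ) :
    ∀ z ∈ ball 0 1, analyticOrderAt (f · - w) z = s.count z := by
  intro z hz
  have han : AnalyticAt ℂ (f · - w) z :=
    (hf.analyticAt (isOpen_ball.mem_nhds hz)).sub analyticAt_const
  by_cases hzs : z ∈ s
  · obtain ⟨G, hG, hGz, hfz⟩ := hfac z hzs
    exact han.analyticOrderAt_eq_natCast.2 ⟨G, hG, hGz, by simpa using hfz⟩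
  · rw [Multiset.count_eq_zero.2 hzs, Nat.cast_zero, han.analyticOrderAt_eq_zero]
    exact sub_ne_zero.2 fun h => hzs ((hsf z (mem_ball_zero_iff.1 hz)).1 h)

open Polynomial in
lemma Complex.card_nthRootsFinset {m : ℕ} (hm : m ≠ 0) {c : ℂ} (hc : c ≠ 0) :
    (nthRootsFinset m c).card = m := by
  have hprim := Complex.isPrimitiveRoot_exp m hm
  rw [nthRootsFinset_def, Multiset.toFinset_card_of_nodup (hprim.nthRoots_nodup hc),
    hprim.card_nthRoots, if_pos (IsAlgClosed.exists_pow_nat_eq c (Nat.pos_of_ne_zero hm))]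

open Polynomial in
lemma eventually_nthRootsFinset_subset {m : ℕ} (hm : m ≠ 0) {N : Set ℂ} (hN : N ∈ 𝓝 0) :
    ∀ᶠ c in 𝓝 (0 : ℂ), (nthRootsFinset m c : Set ℂ) ⊆ N := by
  obtain ⟨ε, hε, hεN⟩ := Metric.mem_nhds_iff.1 hN
  filter_upwards [ball_mem_nhds (0 : ℂ) (pow_pos hε m)] with c hc b hb
  rw [Finset.mem_coe, mem_nthRootsFinset (Nat.pos_of_ne_zero hm)] at hb
  refine hεN (mem_ball_zero_iff.2 ?_)
  rw [mem_ball_zero_iff, ← hb, norm_pow] at hc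
  exact lt_of_pow_lt_pow_left₀ m hε.le hc

lemma AnalyticAt.exists_analyticAt_pow_eq {G : ℂ → ℂ} {a : ℂ} (hG : AnalyticAt ℂ G a)
    (hGa : G a ≠ 0) {m : ℕ} (hm : m ≠ 0) :
    ∃ H : ℂ → ℂ, AnalyticAt ℂ H a ∧ H a ≠ 0 ∧ ∀ z, H z ^ m = G z := by
  obtain ⟨b, hb⟩ := IsAlgClosed.exists_pow_nat_eq (G a) (Nat.pos_of_ne_zero hm)
  refine ⟨fun z => b * (G z / G a) ^ ((m : ℂ)⁻¹), ?_, ?_, fun z => ?_⟩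
  · refine analyticAt_const.mul ((hG.div analyticAt_const hGa).cpow analyticAt_const ?_)
    simp [hGa]
  · simp only [div_self hGa, one_cpow, mul_one]
    rintro rfl
    exact hGa (by rw [← hb, zero_pow hm])
  · rw [mul_pow, cpow_nat_inv_pow _ hm, hb, mul_div_cancel₀ _ hGa]

open Function Polynomial in
lemma eventually_exists_finset_card_eq_of_eventuallyEq_pow_mul {f G : ℂ → ℂ} {a w : ℂ} {m : ℕ}
    (hm : m ≠ 0) (hG : AnalyticAt ℂ G a) (hGa : G a ≠ 0)
    (hfac : ∀ᶠ ζ in 𝓝 a, f ζ - w = (ζ - a) ^ m * G ζ) {U : Set ℂ} (hU : U ∈ 𝓝 a) :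
    ∀ᶠ c in 𝓝[≠] w, ∃ T : Finset ℂ, T.card = m ∧ ∀ ζ ∈ T, ζ ∈ U ∧ f ζ = c := by
  obtain ⟨H, hH, hHa, hHG⟩ := hG.exists_analyticAt_pow_eq hGa hm
  set ψ : ℂ → ℂ := fun ζ => (ζ - a) * H ζ
  have hψ : HasStrictDerivAt ψ (H a) a := by
    have hsub : HasStrictDerivAt (· - a) 1 a := (hasStrictDerivAt_id a).sub_const a
    have hprod := hsub.mul hH.hasStrictDerivAt
    simp only [sub_self, zero_mul, one_mul, add_zero] at hprod
    exact hprod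
  -- `f - w = ψ ^ m` near `a` with `ψ` a local coordinate, so each of the `m` distinct
  -- `m`-th roots of a small `c - w ≠ 0` is `ψ` of a preimage of `c`.
  set V := U ∩ {ζ | f ζ - w = ψ ζ ^ m}
  have hV : V ∈ 𝓝 a := inter_mem hU (hfac.mono fun ζ hζ => by simp [ψ, mul_pow, hHG, hζ])
  have hψV : ψ '' V ∈ 𝓝 0 := by
    simpa [ψ, hψ.map_nhds_eq hHa] using image_mem_map (m := ψ) hV
  have hroots : ∀ᶠ c in 𝓝 w, (nthRootsFinset m (c - w) : Set ℂ) ⊆ ψ '' V :=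
    (tendsto_sub_nhds_zero_iff.2 tendsto_id).eventually (eventually_nthRootsFinset_subset hm hψV)
  filter_upwards [nhdsWithin_le_nhds hroots, self_mem_nhdsWithin] with c hc hcw
  refine ⟨(nthRootsFinset m (c - w)).image (invFunOn ψ V), ?_, ?_⟩
  · rw [Finset.card_image_of_injOn, Complex.card_nthRootsFinset hm (sub_ne_zero.2 hcw)]
    intro b hb b' hb' h
    rw [← invFunOn_eq (hc hb), ← invFunOn_eq (hc hb'), h]
  · simp only [Finset.mem_image]
    rintro _ ⟨b, hb, rfl⟩
    have hmem := invFunOn_mem (hc hb)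
    refine ⟨hmem.1, ?_⟩
    have h : f (invFunOn ψ V b) - w = ψ (invFunOn ψ V b) ^ m := hmem.2
    rw [invFunOn_eq (hc hb), (mem_nthRootsFinset (Nat.pos_of_ne_zero hm) _).1 hb] at h
    linear_combination h

lemma eventually_exists_finset_card_eq_card {f : ℂ → ℂ} {w : ℂ} {s : Multiset ℂ}
    (hfac : ∀ a ∈ s, ∃ G : ℂ → ℂ, AnalyticAt ℂ G a ∧ G a ≠ 0 ∧
      ∀ᶠ ζ in 𝓝 a, f ζ - w = (ζ - a) ^ s.count a * G ζ)
    {V : Set ℂ} (hV : IsOpen V) (hsV : ∀ a ∈ s, a ∈ V) :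
    ∀ᶠ c in 𝓝[≠] w, ∃ T : Finset ℂ, T.card = Multiset.card s ∧ ∀ ζ ∈ T, ζ ∈ V ∧ f ζ = c := by
  obtain ⟨U, hU, hdisj⟩ := s.toFinset.finite_toSet.t2_separation
  have hloc : ∀ a ∈ s.toFinset, ∀ᶠ c in 𝓝[≠] w,
      ∃ T : Finset ℂ, T.card = s.count a ∧ ∀ ζ ∈ T, ζ ∈ U a ∩ V ∧ f ζ = c := by
    intro a ha
    rw [Multiset.mem_toFinset] at ha
    obtain ⟨G, hG, hGa, hfa⟩ := hfac a ha
    exact eventually_exists_finset_card_eq_of_eventuallyEq_pow_mul (Multiset.count_ne_zero.2 ha)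
      hG hGa hfa (inter_mem ((hU a).2.mem_nhds (hU a).1) (hV.mem_nhds (hsV a ha)))
  filter_upwards [(eventually_all_finset _).2 hloc] with c hc
  choose! T hTcard hT using hc
  refine ⟨s.toFinset.biUnion T, ?_, fun ζ hζ => ?_⟩
  · rw [Finset.card_biUnion, Finset.sum_congr rfl hTcard, Multiset.toFinset_sum_count_eq]
    exact fun a ha b hb hab => Finset.disjoint_left.2 fun ζ hζa hζb =>
      Set.disjoint_left.1 (hdisj ha hb hab) (hT a ha ζ hζa).1.1 (hT b hb ζ hζb).1.1
  · obtain ⟨a, ha, hζa⟩ := Finset.mem_biUnion.1 hζ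
    exact ⟨(hT a ha ζ hζa).1.2, (hT a ha ζ hζa).2⟩

lemma ValenceEq.card_le {f : ℂ → ℂ} {c : ℂ} {n : ℕ} (hv : ValenceEq f c n) {T : Finset ℂ}
    (hT : ∀ ζ ∈ T, ‖ζ‖ < 1 ∧ f ζ = c) : T.card ≤ n := by
  obtain ⟨s, hcard, -, hsf, -⟩ := hv
  calc T.card ≤ s.toFinset.card :=
        Finset.card_le_card fun ζ hζ => Multiset.mem_toFinset.2 ((hsf ζ (hT ζ hζ).1).1 (hT ζ hζ).2)
    _ ≤ n := hcard ▸ Multiset.toFinset_card_le s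

lemma eventually_apply_ne_of_valenceEq {f : ℂ → ℂ} {n : ℕ}
    (hval : ∀ w : ℂ, ‖w‖ < 1 → ValenceEq f w n) {w : ℂ} (hw : ‖w‖ < 1) :
    ∀ᶠ p in 𝓝 w ×ˢ atUnitCircle, f p.2 ≠ p.1 := by
  obtain ⟨s, hcard, hs, hsf, hfac⟩ := hval w hw
  obtain ⟨ρ, hρ, hsρ⟩ := exists_lt_subset_ball s.toFinset.finite_toSet.isClosed
    fun a ha => mem_ball_zero_iff.2 (hs a (Multiset.mem_toFinset.1 ha))
  have hsρ' : ∀ a ∈ s, ‖a‖ < ρ := fun a ha => mem_ball_zero_iff.1 (hsρ (Multiset.mem_toFinset.2 ha))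
  have hfibers := eventually_nhdsWithin_iff.1 <|
    eventually_exists_finset_card_eq_card hfac isOpen_ball fun a ha =>
      mem_ball_zero_iff.2 (hsρ' a ha)
  have hdisk : ∀ᶠ c in 𝓝 w, ‖c‖ < 1 := isOpen_lt continuous_norm continuous_const |>.mem_nhds hw
  filter_upwards [(hfibers.and hdisk).prod_mk
    ((eventually_lt_norm_atUnitCircle hρ).and eventually_norm_lt_one_atUnitCircle)]
  rintro ⟨c, z⟩ ⟨⟨hfiber, hc⟩, hρz, hz⟩ hfz
  dsimp only at hfiber hc hρz hz hfz
  rcases eq_or_ne c w with rfl | hcw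
  · exact (hρz.trans (hsρ' z ((hsf z hz).1 hfz))).false
  obtain ⟨T, hTcard, hT⟩ := hfiber hcw
  have hzT : z ∉ T := fun h => (hρz.trans (mem_ball_zero_iff.1 (hT z h).1)).false
  have hle := (hval c hc).card_le (T := insert z T) fun ζ hζ => by
    rcases Finset.mem_insert.1 hζ with rfl | hζ
    · exact ⟨hz, hfz⟩
    · exact ⟨(mem_ball_zero_iff.1 (hT ζ hζ).1).trans hρ, (hT ζ hζ).2⟩
  rw [Finset.card_insert_of_notMem hzT, hTcard, hcard] at hle
  omega

lemma tendsto_norm_atUnitCircle_of_valenceEq {f : ℂ → ℂ} {n : ℕ}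
    (hmaps : ∀ z : ℂ, ‖z‖ < 1 → ‖f z‖ < 1) (hval : ∀ w : ℂ, ‖w‖ < 1 → ValenceEq f w n) :
    Tendsto (‖f ·‖) atUnitCircle (𝓝 1) := by
  refine tendsto_order.2 ⟨fun r hr => ?_, fun r hr =>
    eventually_norm_lt_one_atUnitCircle.mono fun z hz => (hmaps z hz).trans hr⟩
  obtain ⟨U, hU, t, ht, hUt⟩ := mem_prod_iff.1 <|
    (isCompact_closedBall (0 : ℂ) r).mem_nhdsSet_prod_of_forall fun w hw =>
      eventually_apply_ne_of_valenceEq hval ((mem_closedBall_zero_iff.1 hw).trans_lt hr)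
  filter_upwards [ht] with z hz
  by_contra hle
  exact hUt (show (f z, z) ∈ U ×ˢ t from
    ⟨subset_of_mem_nhdsSet hU (mem_closedBall_zero_iff.2 (not_lt.1 hle)), hz⟩) rfl

lemma Multiset.exists_eq_univ_val_map {α : Type*} {s : Multiset α} {n : ℕ}
    (hs : Multiset.card s = n) : ∃ z : Fin n → α, s = Finset.univ.val.map z := by
  rcases s with ⟨l⟩
  obtain rfl : l.length = n := hs
  exact ⟨l.get, by rw [Fin.univ_val_map, List.ofFn_get]; rfl⟩

theorem fatou_rado_constant_valence_general (n : ℕ) (f : ℂ → ℂ)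
    (hf : DifferentiableOn ℂ f (Metric.ball (0 : ℂ) 1))
    (hmaps : ∀ z : ℂ, ‖z‖ < 1 → ‖f z‖ < 1)
    (hval : ∀ w : ℂ, ‖w‖ < 1 → ValenceEq f w n) :
    ∃ (α : ℝ) (z : Fin n → ℂ), (∀ k, ‖z k‖ < 1) ∧
      ∀ w : ℂ, ‖w‖ < 1 →
        f w = Complex.exp (α * Complex.I) * ∏ k, (z k - w) / (1 - conj (z k) * w) := by
  obtain ⟨s, hcard, hs, hsf, hfac⟩ := hval 0 (by simp)
  obtain ⟨h, hh, hh0, hfh⟩ := exists_eq_blaschkeProduct_mul_of_analyticOrderAt_eq_count hs hf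
    (by simpa using analyticOrderAt_sub_eq_count hf hsf hfac)
  have hB := tendsto_norm_blaschkeProduct hs
  have hlim : Tendsto (‖h ·‖) atUnitCircle (𝓝 1) := by
    have hquot := (tendsto_norm_atUnitCircle_of_valenceEq hmaps hval).div hB one_ne_zero
    rw [div_one] at hquot
    refine hquot.congr' ?_
    filter_upwards [eventually_norm_lt_one_atUnitCircle, hB.eventually_ne one_ne_zero] with z hz hBz
    rw [Pi.div_apply, hfh z (mem_ball_zero_iff.2 hz), norm_mul, mul_div_cancel_left₀ _ hBz]
  obtain ⟨c, hc, hhc⟩ := exists_eqOn_const_of_tendsto_norm_atUnitCircle hh hh0 hlim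
  obtain ⟨z, rfl⟩ := Multiset.exists_eq_univ_val_map hcard
  refine ⟨c.arg, z, fun k => hs _ (Multiset.mem_map_of_mem z (Finset.mem_univ_val k)),
    fun w hw => ?_⟩
  have hcexp : exp (c.arg * I) = c := by simpa [hc] using norm_mul_exp_arg_mul_I c
  rw [hfh w (mem_ball_zero_iff.2 hw), hhc (mem_ball_zero_iff.2 hw), hcexp, mul_comm]
  simp [blaschkeProduct, blaschkeFactor, Finset.prod_eq_multiset_prod, Function.comp_def]

/-- **Fatou–Radó.**  Let `n ≥ 1` and let `f : 𝔻 → 𝔻` be analytic, surjective onto `𝔻`,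
and of constant valence `n` (each `w ∈ 𝔻` is attained exactly `n` times counted with
multiplicity).  Then `f` is a finite Blaschke product of degree `n`. -/
theorem fatou_rado_constant_valence (n : ℕ) (hn : 1 ≤ n) (f : ℂ → ℂ)
    (hf : DifferentiableOn ℂ f (Metric.ball (0 : ℂ) 1))
    (hmaps : ∀ z : ℂ, ‖z‖ < 1 → ‖f z‖ < 1)
    (hsurj : ∀ w : ℂ, ‖w‖ < 1 → ∃ z : ℂ, ‖z‖ < 1 ∧ f z = w)
    (hval : ∀ w : ℂ, ‖w‖ < 1 → ValenceEq f w n) :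
    ∃ (α : ℝ) (z : Fin n → ℂ), (∀ k, ‖z k‖ < 1) ∧
      ∀ w : ℂ, ‖w‖ < 1 →
        f w = Complex.exp (α * Complex.I) * ∏ k, (z k - w) / (1 - conj (z k) * w) :=
  fatou_rado_constant_valence_general n f hf hmaps hval
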